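/- Let H be a Hilbert space, V a dense subspace, A : V → H a linear map satisfying ‖A v‖ ≥ c‖v‖ for all v ∈ V with c > 0, and let f ∈ H. Then the linear functional L(Av) := ⟨v, f⟩ defined on the range D = A(V) is well-defined and bounded with ‖L‖ ≤ ‖f‖/c, and extends to a bounded functional on H; consequently there exists r ∈ H with ‖r‖ ≤ ‖f‖/c such that ⟨Av, r⟩ = ⟨v, f⟩ for all v ∈ V. -/

import Mathlib

/-- Duality/Riesz representation: if `A : V → H` satisfies `‖Av‖ ≥ c‖v‖` on a dense
subspace `V` and `f ∈ H`, there exists `r ∈ H` with `‖r‖ ≤ ‖f‖/c` and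
`⟨Av, r⟩ = ⟨v, f⟩` for all `v ∈ V`. -/
theorem stmt12 {H : Type*} [NormedAddCommGroup H] [InnerProductSpace ℝ H] [CompleteSpace H]
    (V : Submodule ℝ H) (hV : Dense (V : Set H))
    (A : V →ₗ[ℝ] H) (c : ℝ) (hc : 0 < c)
    (hA : ∀ v : V, c * ‖(v : H)‖ ≤ ‖A v‖) (f : H) :
    ∃ r : H, ‖r‖ ≤ ‖f‖ / c ∧ ∀ v : V, (inner ℝ (A v) r : ℝ) = inner ℝ (v : H) f := by
  have hinj : Function.Injective A := by
    rw [← LinearMap.ker_eq_bot, LinearMap.ker_eq_bot']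
    intro v hv
    have := hA v
    rw [hv, norm_zero] at this
    have : (v : H) = 0 := by
      have hn := norm_nonneg (v : H)
      have : ‖(v : H)‖ = 0 := by nlinarith
      simpa using this
    exact Subtype.ext this
  set e := LinearEquiv.ofInjective A hinj with he
  -- linear functional on the range of A
  set φ₀ : (LinearMap.range A) →ₗ[ℝ] ℝ :=
    ((innerSL ℝ f).toLinearMap.comp V.subtype).comp e.symm.toLinearMap with hφ₀
  have hnormle : ∀ v : V, ‖(v : H)‖ ≤ ‖A v‖ / c := fun v =>
    (le_div_iff₀' hc).2 (hA v)
  have hbound : ∀ x : LinearMap.range A, ‖φ₀ x‖ ≤ (‖f‖ / c) * ‖x‖ := by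
    intro x
    set v := e.symm x with hv
    have hx : A v = (x : H) := by
      have : (e v : H) = A v := rfl
      rw [hv, ← this, LinearEquiv.apply_symm_apply]
    have h1 : ‖φ₀ x‖ ≤ ‖f‖ * ‖(v : H)‖ := by
      simp only [hφ₀, LinearMap.coe_comp, Function.comp_apply,
        ContinuousLinearMap.coe_coe, innerSL_apply_apply, Submodule.coe_subtype]
      exact norm_inner_le_norm f _
    have h2 : ‖(v : H)‖ ≤ ‖(x : H)‖ / c := by
      simpa [hx] using hnormle v
    calc ‖φ₀ x‖ ≤ ‖f‖ * ‖(v : H)‖ := h1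
      _ ≤ ‖f‖ * (‖(x : H)‖ / c) := by
          exact mul_le_mul_of_nonneg_left h2 (norm_nonneg f)
      _ = (‖f‖ / c) * ‖x‖ := by rw [show ‖x‖ = ‖(x : H)‖ from rfl]; ring
  set φ : (LinearMap.range A) →L[ℝ] ℝ := φ₀.mkContinuous (‖f‖ / c) hbound with hφ
  obtain ⟨g, hg, hgnorm⟩ := exists_extension_norm_eq (LinearMap.range A) φ
  have hφnorm : ‖φ‖ ≤ ‖f‖ / c :=
    LinearMap.mkContinuous_norm_le φ₀ (div_nonneg (norm_nonneg f) hc.le) hbound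
  refine ⟨(InnerProductSpace.toDual ℝ H).symm g, ?_, ?_⟩
  · rw [LinearIsometryEquiv.norm_map]
    exact hgnorm ▸ hφnorm
  · intro v
    have hmem : A v ∈ LinearMap.range A := LinearMap.mem_range_self A v
    have h1 : (inner ℝ (A v) ((InnerProductSpace.toDual ℝ H).symm g) : ℝ) = g (A v) := by
      rw [real_inner_comm]; exact InnerProductSpace.toDual_symm_apply
    rw [h1, show g (A v) = φ ⟨A v, hmem⟩ from hg ⟨A v, hmem⟩]
    have hsymm : e.symm ⟨A v, hmem⟩ = v := by
      apply hinj
      have : (e (e.symm ⟨A v, hmem⟩) : H) = A (e.symm ⟨A v, hmem⟩) := rfl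
      rw [← this, LinearEquiv.apply_symm_apply]
    show φ₀ ⟨A v, hmem⟩ = _
    simp only [hφ₀, LinearMap.coe_comp, Function.comp_apply,
      ContinuousLinearMap.coe_coe, innerSL_apply_apply, Submodule.coe_subtype, LinearEquiv.coe_coe, hsymm]
    rw [real_inner_comm]
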